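/- Let g : ℂ^N → ℂ be a polynomial function and let ρ, ρ' : [0,ε) → ℂ^N be real analytic paths with ρ(0) = ρ'(0), ρ(s) ≠ ρ'(s) for s ≠ 0, and g(ρ(s)) = g(ρ'(s)) = 0 for all s ∈ [0,ε). Then dg(ρ(s)) applied to the unit secant vector (ρ'(s) − ρ(s))/‖ρ'(s) − ρ(s)‖ tends to 0 as s → 0⁺; equivalently, if o_ℓ denotes the order in s of ℓ(s) := ρ'(s) − ρ(s), then dg(ρ(s))(ℓ(s)/|s|^{o_ℓ}) → 0 as s → 0⁺. -/

import Mathlib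

open MvPolynomial Filter Topology Set

noncomputable section

namespace NewtonPaper

/-- A point of a finite-dimensional Euclidean space viewed as a plain function. -/
def pt {m : ℕ} (p : EuclideanSpace ℂ (Fin m)) : Fin m → ℂ := p

/-- `d(w;g)`: the minimal value of `∑ i, w i * α i` over the support of `g`. -/
def dmin {n : ℕ} (w : Fin n → ℕ) (g : MvPolynomial (Fin n) ℂ) : ℕ :=
  sInf {m : ℕ | ∃ α ∈ g.support, (∑ i, w i * α i) = m}

/-- The face function `g_w` of `g` with respect to the weight vector `w`. -/
def facePoly {n : ℕ} (w : Fin n → ℕ) (g : MvPolynomial (Fin n) ℂ) : MvPolynomial (Fin n) ℂ :=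
  ∑ α ∈ g.support.filter (fun α => (∑ i, w i * α i) = dmin w g), monomial α (coeff α g)

/-- The Newton polyhedron `Γ₊(g)`. -/
def NewtonPolyhedron {n : ℕ} (g : MvPolynomial (Fin n) ℂ) : Set (Fin n → ℝ) :=
  convexHull ℝ (⋃ α ∈ g.support, {x : Fin n → ℝ | ∀ i, (α i : ℝ) ≤ x i})

/-- The Newton boundary `Γ(g)`: the union of the compact faces of `Γ₊(g)`, i.e. of the
faces of `Γ₊(g)` supported by strictly positive linear functionals. -/
def NewtonBoundary {n : ℕ} (g : MvPolynomial (Fin n) ℂ) : Set (Fin n → ℝ) :=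
  ⋃ w ∈ {w : Fin n → ℝ | ∀ i, 0 < w i},
    {x ∈ NewtonPolyhedron g |
      ∀ y ∈ NewtonPolyhedron g, (∑ i, w i * x i) ≤ ∑ i, w i * y i}

/-- `g` vanishes identically on the coordinate subspace `ℂ^I`. -/
def VanishesOn {n : ℕ} (g : MvPolynomial (Fin n) ℂ) (I : Set (Fin n)) : Prop :=
  ∀ z : Fin n → ℂ, (∀ i, i ∉ I → z i = 0) → eval z g = 0

/-- `g 0, …, g (p-1)` define a (Newton) non-degenerate complete intersection germ at `0`. -/
def IsNondegCI {n p : ℕ} (g : Fin p → MvPolynomial (Fin n) ℂ) : Prop :=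
  ∀ w : Fin n → ℕ, (∀ i, 0 < w i) →
    ∀ z : Fin n → ℂ, (∀ i, z i ≠ 0) → (∀ j, eval z (facePoly w (g j)) = 0) →
      LinearIndependent ℂ fun j => fun i => eval z (pderiv i (facePoly w (g j)))

/-- `R` is a radius of local tameness of the set of functions `{g 0, …, g (p-1)}`. -/
def IsTameRadius {n p : ℕ} (R : ℝ) (g : Fin p → MvPolynomial (Fin n) ℂ) : Prop :=
  ∀ I : Finset (Fin n), I.Nonempty → (∀ j, VanishesOn (g j) ↑I) →
    ∀ w : Fin n → ℕ, w ≠ 0 → (∀ i, w i = 0 ↔ i ∈ I) →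
      ∀ z : Fin n → ℂ, (∀ i, z i ≠ 0) → (∑ i ∈ I, ‖z i‖ ^ 2) < R →
        (∀ j, eval z (facePoly w (g j)) = 0) →
        LinearIndependent ℂ fun j => fun i : {i : Fin n // i ∉ I} =>
          eval z (pderiv i.1 (facePoly w (g j)))

/-- The specialisation `f_t` of a polynomial `P` on `ℂ × ℂⁿ` (variable `0` is `t`). -/
def specialize {n : ℕ} (t : ℂ) (P : MvPolynomial (Fin (n + 1)) ℂ) : MvPolynomial (Fin n) ℂ :=
  aeval (Fin.cases (C t) fun i => X i) P

/-- The family `{f_t}`, where `f = (F 0) ⋯ (F (k₀-1))`, is Newton-admissible. -/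
def NewtonAdmissible {n k₀ : ℕ} (F : Fin k₀ → MvPolynomial (Fin (n + 1)) ℂ) : Prop :=
  ∃ R > (0 : ℝ), ∃ τ > (0 : ℝ), ∀ t : ℂ, ‖t‖ < τ →
    (∀ k, NewtonBoundary (specialize t (F k)) = NewtonBoundary (specialize 0 (F k))) ∧
    ∀ (p : ℕ) (κ : Fin p → Fin k₀), Function.Injective κ →
      IsNondegCI (fun j => specialize t (F (κ j))) ∧
      ∃ R' > R, IsTameRadius R' fun j => specialize t (F (κ j))

/-- The stratum `S^I(K)` of the canonical toric stratification of `V(f) ⊆ ℂ × ℂⁿ`. -/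
def stratum {n k₀ : ℕ} (F : Fin k₀ → MvPolynomial (Fin (n + 1)) ℂ)
    (I : Set (Fin n)) (K : Set (Fin k₀)) : Set (EuclideanSpace ℂ (Fin (n + 1))) :=
  {p | (∀ i : Fin n, pt p i.succ ≠ 0 ↔ i ∈ I) ∧ ∀ k, eval (pt p) (F k) = 0 ↔ k ∈ K}

/-- The slice `S^I_t(K)` of `S^I(K)`, viewed in `ℂⁿ`. -/
def stratumT {n k₀ : ℕ} (F : Fin k₀ → MvPolynomial (Fin (n + 1)) ℂ) (t : ℂ)
    (I : Set (Fin n)) (K : Set (Fin k₀)) : Set (EuclideanSpace ℂ (Fin n)) :=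
  {z | (∀ i : Fin n, pt z i ≠ 0 ↔ i ∈ I) ∧ ∀ k, eval (pt z) (specialize t (F k)) = 0 ↔ k ∈ K}

/-- Orthogonal projection onto a subspace, as an endomorphism. -/
def projOf {m : ℕ} (T : Submodule ℂ (EuclideanSpace ℂ (Fin m))) :
    EuclideanSpace ℂ (Fin m) →L[ℂ] EuclideanSpace ℂ (Fin m) :=
  T.subtypeL.comp T.orthogonalProjectionOnto

/-- Tangent space of a set at a point (the ℂ-span of the tangent cone; for a
non-singular complex submanifold this is the usual tangent space). -/
def tangentSpaceAt {m : ℕ} (S : Set (EuclideanSpace ℂ (Fin m)))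
    (p : EuclideanSpace ℂ (Fin m)) : Submodule ℂ (EuclideanSpace ℂ (Fin m)) :=
  Submodule.span ℂ (tangentConeAt ℂ S p)

/-- Convergence of subspaces in the sense of convergence of orthogonal projections. -/
def TendstoSubspaces {α : Type*} {m : ℕ} (l : Filter α)
    (T : α → Submodule ℂ (EuclideanSpace ℂ (Fin m)))
    (T' : Submodule ℂ (EuclideanSpace ℂ (Fin m))) : Prop :=
  Tendsto (fun x => projOf (T x)) l (𝓝 (projOf T'))

/-- Whitney's condition (b) for the pair `(S', S)`. -/
def WhitneyB {m : ℕ} (S' S : Set (EuclideanSpace ℂ (Fin m))) : Prop :=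
  ∀ q ∈ S' ∩ closure S, ∀ pm qm : ℕ → EuclideanSpace ℂ (Fin m),
    ∀ T : Submodule ℂ (EuclideanSpace ℂ (Fin m)), ∀ u : EuclideanSpace ℂ (Fin m),
      (∀ j, pm j ∈ S) → (∀ j, qm j ∈ S') → (∀ j, pm j ≠ qm j) →
      Tendsto pm atTop (𝓝 q) → Tendsto qm atTop (𝓝 q) →
      TendstoSubspaces atTop (fun j => tangentSpaceAt S (pm j)) T →
      Tendsto (fun j => (‖pm j - qm j‖ : ℝ)⁻¹ • (pm j - qm j)) atTop (𝓝 u) →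
      u ∈ T

/-- `S` is, near `p ∈ S`, a non-singular (complex) locally closed submanifold. -/
def IsNonsingularAt {m : ℕ} (S : Set (EuclideanSpace ℂ (Fin m)))
    (p : EuclideanSpace ℂ (Fin m)) : Prop :=
  ∃ (k : ℕ) (U : Set (EuclideanSpace ℂ (Fin m)))
    (g : EuclideanSpace ℂ (Fin m) → EuclideanSpace ℂ (Fin k)),
    IsOpen U ∧ p ∈ U ∧ Differentiable ℂ g ∧ S ∩ U = {x ∈ U | g x = 0} ∧
      Function.Surjective (fderiv ℂ g p)

/-- Whitney (b)-regular stratification of `V`. -/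
def IsWhitneyStratification {m : ℕ} (V : Set (EuclideanSpace ℂ (Fin m)))
    (𝒮 : Set (Set (EuclideanSpace ℂ (Fin m)))) : Prop :=
  ⋃₀ 𝒮 = V ∧
  (∀ S ∈ 𝒮, ∀ S' ∈ 𝒮, S ≠ S' → Disjoint S S') ∧
  (∀ S ∈ 𝒮, ∀ p ∈ S, IsNonsingularAt S p) ∧
  (∀ S ∈ 𝒮, ∀ S' ∈ 𝒮, S ≠ S' → WhitneyB S' S)

/-- The coefficient vector of the complex differential of `P` at `p`. -/
def dvec {m : ℕ} (P : MvPolynomial (Fin m) ℂ) (p : EuclideanSpace ℂ (Fin m)) :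
    Fin m → ℂ := fun j => eval (pt p) (pderiv j P)

/-- The kernel of the complex differential of `P` at `p`. -/
def dKer {m : ℕ} (P : MvPolynomial (Fin m) ℂ) (p : EuclideanSpace ℂ (Fin m)) :
    Submodule ℂ (EuclideanSpace ℂ (Fin m)) :=
  LinearMap.ker
    ((∑ j, dvec P p j • (EuclideanSpace.proj j : EuclideanSpace ℂ (Fin m) →L[ℂ] ℂ) :
      EuclideanSpace ℂ (Fin m) →L[ℂ] ℂ) : EuclideanSpace ℂ (Fin m) →ₗ[ℂ] ℂ)

/-- The subspace `ℂ × ℂ^I ⊆ ℂ × ℂⁿ`, where `I = {i | (i : ℕ) < nI}`. -/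
def axisCI (n nI : ℕ) : Submodule ℂ (EuclideanSpace ℂ (Fin (n + 1))) :=
  ⨅ i ∈ {i : Fin n | nI ≤ (i : ℕ)},
    LinearMap.ker ((EuclideanSpace.proj i.succ : EuclideanSpace ℂ (Fin (n + 1)) →L[ℂ] ℂ) :
      EuclideanSpace ℂ (Fin (n + 1)) →ₗ[ℂ] ℂ)

/-- Thom's `a_f` condition for a stratification `𝒮`, with `V(f) = {f = 0}`. -/
def ThomAf {m : ℕ} (P : MvPolynomial (Fin m) ℂ)
    (𝒮 : Set (Set (EuclideanSpace ℂ (Fin m)))) : Prop :=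
  ∀ S ∈ 𝒮, ∀ q ∈ S, ∀ pm : ℕ → EuclideanSpace ℂ (Fin m),
    ∀ T : Submodule ℂ (EuclideanSpace ℂ (Fin m)),
      (∀ j, eval (pt (pm j)) P ≠ 0) → (∀ j, dvec P (pm j) ≠ 0) →
      Tendsto pm atTop (𝓝 q) →
      TendstoSubspaces atTop (fun j => dKer P (pm j)) T →
      tangentSpaceAt S q ≤ T

/-- Inclusion `Fin m → Fin k₀` given `m ≤ k₀`. -/
def castIdx {k₀ m : ℕ} (h : m ≤ k₀) (k : Fin m) : Fin k₀ :=
  ⟨k, lt_of_lt_of_le k.isLt h⟩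

end NewtonPaper

/-!
Since `g` vanishes at both `ρ s` and `ρ' s`, strict differentiability of `g` at `ρ 0` gives
`dg(ρ 0)(ρ' s - ρ s) = o(‖ρ' s - ρ s‖)`, and continuity of `dg` lets one replace `dg(ρ 0)` by
`dg(ρ s)` on unit vectors.
-/

theorem MvPolynomial.hasFDerivAt_eval {σ 𝕜 : Type*} [Fintype σ] [NontriviallyNormedField 𝕜]
    (p : MvPolynomial σ 𝕜) (x : σ → 𝕜) :
    HasFDerivAt (fun y => eval y p)
      (∑ i, eval x (pderiv i p) • (ContinuousLinearMap.proj i : (σ → 𝕜) →L[𝕜] 𝕜)) x := by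
  classical
  induction p using MvPolynomial.induction_on with
  | C a =>
    simp only [eval_C]
    exact (hasFDerivAt_const a x).congr_fderiv (by ext; simp)
  | add p q hp hq =>
    simp only [map_add (eval _)]
    exact (hp.add hq).congr_fderiv (by ext; simp [add_mul, Finset.sum_add_distrib])
  | mul_X p i hp =>
    simp only [map_mul (eval _), eval_X]
    refine (hp.mul (ContinuousLinearMap.proj i).hasFDerivAt).congr_fderiv ?_
    ext v
    simp [Pi.single_apply, apply_ite, Finset.sum_add_distrib, add_mul, Finset.mul_sum, mul_assoc]

section UnitSecant

variable {𝕜 E F α : Type*} [RCLike 𝕜] [NormedAddCommGroup E] [NormedSpace 𝕜 E]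
  [NormedAddCommGroup F] [NormedSpace 𝕜 F]

variable (𝕜) in
/-- This is `0` when `x = y`, as `‖0‖⁻¹ = 0`. -/
def unitSecant (x y : E) : E := ((‖y - x‖⁻¹ : ℝ) : 𝕜) • (y - x)

theorem norm_unitSecant_le (x y : E) : ‖unitSecant 𝕜 x y‖ ≤ 1 := by
  rw [unitSecant, norm_smul, RCLike.norm_ofReal, abs_inv, abs_norm]
  exact inv_mul_le_one_of_le₀ le_rfl (norm_nonneg _)

theorem norm_apply_unitSecant (L : E →L[𝕜] F) (x y : E) :
    ‖L (unitSecant 𝕜 x y)‖ = ‖L (y - x)‖ / ‖y - x‖ := by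
  rw [unitSecant, L.map_smul, norm_smul, RCLike.norm_ofReal, abs_inv, abs_norm, inv_mul_eq_div]

variable {l : Filter α} {f : E → F} {x₀ : E} {x y : α → E}

theorem tendsto_apply_unitSecant_of_hasStrictFDerivAt {f' : E →L[𝕜] F}
    (hf : HasStrictFDerivAt f f' x₀) (hx : Tendsto x l (𝓝 x₀)) (hy : Tendsto y l (𝓝 x₀))
    (hfxy : ∀ᶠ s in l, f (x s) = f (y s)) :
    Tendsto (fun s => f' (unitSecant 𝕜 (x s) (y s))) l (𝓝 0) := by
  have hlo := (hasStrictFDerivAt_iff_isLittleO.1 hf).comp_tendsto (hy.prodMk_nhds hx)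
  refine tendsto_zero_iff_norm_tendsto_zero.2 <|
    hlo.norm_norm.tendsto_div_nhds_zero.congr' <| hfxy.mono fun s hs => ?_
  simp only [Function.comp_apply, hs, sub_self, zero_sub, norm_neg, norm_apply_unitSecant]

theorem tendsto_sub_apply_unitSecant {f' : E → E →L[𝕜] F} (hf' : ContinuousAt f' x₀)
    (hx : Tendsto x l (𝓝 x₀)) :
    Tendsto (fun s => (f' (x s) - f' x₀) (unitSecant 𝕜 (x s) (y s))) l (𝓝 0) := by
  have hlim : Tendsto (fun s => ‖f' (x s) - f' x₀‖) l (𝓝 0) :=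
    tendsto_iff_norm_sub_tendsto_zero.1 (hf'.tendsto.comp hx)
  refine squeeze_zero_norm (fun s => ?_) hlim
  exact (ContinuousLinearMap.le_opNorm _ _).trans
    (mul_le_of_le_one_right (norm_nonneg _) (norm_unitSecant_le _ _))

theorem tendsto_apply_unitSecant_of_hasFDerivAt {f' : E → E →L[𝕜] F}
    (hf : ∀ᶠ z in 𝓝 x₀, HasFDerivAt f (f' z) z) (hf' : ContinuousAt f' x₀)
    (hx : Tendsto x l (𝓝 x₀)) (hy : Tendsto y l (𝓝 x₀))
    (hfxy : ∀ᶠ s in l, f (x s) = f (y s)) :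
    Tendsto (fun s => f' (x s) (unitSecant 𝕜 (x s) (y s))) l (𝓝 0) := by
  have hstrict := hasStrictFDerivAt_of_hasFDerivAt_of_continuousAt hf hf'
  simpa using (tendsto_sub_apply_unitSecant (y := y) hf' hx).add
    (tendsto_apply_unitSecant_of_hasStrictFDerivAt hstrict hx hy hfxy)

end UnitSecant

namespace NewtonPaper

theorem hasFDerivAt_eval_pt {N : ℕ} (g : MvPolynomial (Fin N) ℂ) (x : EuclideanSpace ℂ (Fin N)) :
    HasFDerivAt (fun y => eval (pt y) g)
      (∑ j, dvec g x j • (EuclideanSpace.proj j : EuclideanSpace ℂ (Fin N) →L[ℂ] ℂ)) x :=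
  ((hasFDerivAt_eval g (pt x)).comp x (EuclideanSpace.equiv (Fin N) ℂ).hasFDerivAt).congr_fderiv
    (by ext; simp [dvec, pt])

theorem continuous_dvec_smul_proj {N : ℕ} (g : MvPolynomial (Fin N) ℂ) :
    Continuous fun x =>
      ∑ j, dvec g x j • (EuclideanSpace.proj j : EuclideanSpace ℂ (Fin N) →L[ℂ] ℂ) :=
  continuous_finsetSum _ fun _ _ =>
    ((continuous_eval _).comp (PiLp.continuous_ofLp 2 _)).smul continuous_const

theorem differential_kills_unit_secant_general (N : ℕ) (g : MvPolynomial (Fin N) ℂ)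
    (ρ ρ' : ℝ → EuclideanSpace ℂ (Fin N)) (ε : ℝ) (hε : 0 < ε)
    (hρ : AnalyticAt ℝ ρ 0) (hρ' : AnalyticAt ℝ ρ' 0)
    (h0 : ρ 0 = ρ' 0)
    (hgρ : ∀ s ∈ Set.Ico (0 : ℝ) ε, eval (pt (ρ s)) g = 0)
    (hgρ' : ∀ s ∈ Set.Ico (0 : ℝ) ε, eval (pt (ρ' s)) g = 0) :
    Tendsto (fun s : ℝ =>
        ∑ j, eval (pt (ρ s)) (pderiv j g) *
          pt ((‖ρ' s - ρ s‖ : ℝ)⁻¹ • (ρ' s - ρ s)) j)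
      (𝓝[>] 0) (𝓝 0) := by
  have hx : Tendsto ρ (𝓝[>] 0) (𝓝 (ρ 0)) := hρ.continuousAt.tendsto.mono_left nhdsWithin_le_nhds
  have hy : Tendsto ρ' (𝓝[>] 0) (𝓝 (ρ 0)) :=
    h0 ▸ hρ'.continuousAt.tendsto.mono_left nhdsWithin_le_nhds
  have hfxy : ∀ᶠ s in 𝓝[>] 0, eval (pt (ρ s)) g = eval (pt (ρ' s)) g := by
    filter_upwards [Ioo_mem_nhdsGT hε] with s hs
    rw [hgρ s (Ioo_subset_Ico_self hs), hgρ' s (Ioo_subset_Ico_self hs)]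
  convert tendsto_apply_unitSecant_of_hasFDerivAt (.of_forall (hasFDerivAt_eval_pt g))
    (continuous_dvec_smul_proj g).continuousAt hx hy hfxy using 2 with s
  simp [unitSecant, dvec, pt, RCLike.real_smul_eq_coe_smul (K := ℂ), Finset.mul_sum, mul_left_comm]

/-- §7.7 of Eyral–Oka. If `g` vanishes along two real analytic paths
`ρ, ρ'` with the same origin, then `dg(ρ(s))` applied to the unit secant vector
`(ρ'(s) − ρ(s))/‖ρ'(s) − ρ(s)‖` tends to `0` as `s → 0⁺`. -/
theorem differential_kills_unit_secant (N : ℕ) (g : MvPolynomial (Fin N) ℂ)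
    (ρ ρ' : ℝ → EuclideanSpace ℂ (Fin N)) (ε : ℝ) (hε : 0 < ε)
    (hρ : AnalyticAt ℝ ρ 0) (hρ' : AnalyticAt ℝ ρ' 0)
    (h0 : ρ 0 = ρ' 0)
    (hne : ∀ s ∈ Set.Ioo (0 : ℝ) ε, ρ s ≠ ρ' s)
    (hgρ : ∀ s ∈ Set.Ico (0 : ℝ) ε, eval (pt (ρ s)) g = 0)
    (hgρ' : ∀ s ∈ Set.Ico (0 : ℝ) ε, eval (pt (ρ' s)) g = 0) :
    Tendsto (fun s : ℝ =>
        ∑ j, eval (pt (ρ s)) (pderiv j g) *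
          pt ((‖ρ' s - ρ s‖ : ℝ)⁻¹ • (ρ' s - ρ s)) j)
      (𝓝[>] 0) (𝓝 0) :=
  differential_kills_unit_secant_general N g ρ ρ' ε hε hρ hρ' h0 hgρ hgρ'

end NewtonPaper
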